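/- arXiv:1711.01035 — 4 statements merged into one kernel-verified Lean document; each statement's English description precedes it below -/
import Mathlib

section
/- If the almost contact metric manifold M is of the first class with respect to the Riemannian connection D, then it is of the first class with respect to the semi-symmetric non-metric connection B̃; that is, (B̃_X A)(Ȳ) = −(B̃_{X̄} A)(Y) = (B̃_Y A)(X̄) for all vector fields X, Y, and B̃_T F = 0. -/
/-- An almost contact metric manifold together with its Riemannian (Levi-Civita)
connection, modelled algebraically: `R` is the ring of smooth functions, `V` the
module of vector fields, `act X f` is the derivative `X f` of a function along a
vector field, `bracket` the Lie bracket, `g` the Riemannian metric, `F` the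
`(1,1)`-tensor, `T` the structure vector field, `A` the structure 1-form, and
`D` the Levi-Civita connection. -/
structure ACM (R : Type*) [CommRing R] (V : Type*) [AddCommGroup V] [Module R V] where
  /-- action of vector fields on functions, `X f` -/
  act : V → R → R
  /-- Lie bracket of vector fields -/
  bracket : V → V → V
  /-- the Riemannian metric -/
  g : V → V → R
  /-- the `(1,1)`-tensor field `F`, `X̄ = F X` -/
  F : V → V
  /-- the structure vector field `T` -/
  T : V
  /-- the structure 1-form `A` -/
  A : V → R
  /-- the Riemannian (Levi-Civita) connection `D` -/
  D : V → V → V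
  act_add : ∀ X (f h : R), act X (f + h) = act X f + act X h
  act_mul : ∀ X (f h : R), act X (f * h) = act X f * h + f * act X h
  g_add_left : ∀ X Y Z, g (X + Y) Z = g X Z + g Y Z
  g_smul_left : ∀ (f : R) X Y, g (f • X) Y = f * g X Y
  g_symm : ∀ X Y, g X Y = g Y X
  F_add : ∀ X Y, F (X + Y) = F X + F Y
  F_smul : ∀ (f : R) X, F (f • X) = f • F X
  A_add : ∀ X Y, A (X + Y) = A X + A Y
  A_smul : ∀ (f : R) X, A (f • X) = f * A X
  /-- `F(F X) = -X + A(X) T` -/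
  FF : ∀ X, F (F X) = -X + A X • T
  /-- `A(F X) = 0` -/
  A_F : ∀ X, A (F X) = 0
  /-- `g(F X, F Y) = g(X, Y) - A(X) A(Y)` -/
  gFF : ∀ X Y, g (F X) (F Y) = g X Y - A X * A Y
  /-- `A(X) = g(X, T)` -/
  A_eq : ∀ X, A X = g X T
  D_add_left : ∀ X Y Z, D (X + Y) Z = D X Z + D Y Z
  D_smul_left : ∀ (f : R) X Y, D (f • X) Y = f • D X Y
  D_add_right : ∀ X Y Z, D X (Y + Z) = D X Y + D X Z
  D_leibniz : ∀ X (f : R) Y, D X (f • Y) = act X f • Y + f • D X Y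
  /-- `D` is torsion-free -/
  torsion_free : ∀ X Y, D X Y - D Y X = bracket X Y
  /-- `D` is a metric connection -/
  metricity : ∀ X Y Z, act X (g Y Z) = g (D X Y) Z + g Y (D X Z)

namespace ACM

variable {R : Type*} [CommRing R] {V : Type*} [AddCommGroup V] [Module R V] (M : ACM R V)

/-- the fundamental 2-form `'F(X,Y) = g(F X, Y)` -/
def pF (X Y : V) : R := M.g (M.F X) Y

/-- the semi-symmetric non-metric connection `B̃_X Y = D_X Y + 'F(X,Y) T` -/
def B (X Y : V) : V := M.D X Y + M.pF X Y • M.T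

/-- the torsion tensor of `B̃`: `S̃(X,Y) = B̃_X Y - B̃_Y X - [X,Y]` -/
def S (X Y : V) : V := M.B X Y - M.B Y X - M.bracket X Y

/-- `(D_X A)(Y) = X(A(Y)) - A(D_X Y)` -/
def DA (X Y : V) : R := M.act X (M.A Y) - M.A (M.D X Y)

/-- `(B̃_X A)(Y) = X(A(Y)) - A(B̃_X Y)` -/
def BA (X Y : V) : R := M.act X (M.A Y) - M.A (M.B X Y)

/-- `(D_X 'F)(Y,Z) = X('F(Y,Z)) - 'F(D_X Y, Z) - 'F(Y, D_X Z)` -/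
def DpF (X Y Z : V) : R := M.act X (M.pF Y Z) - M.pF (M.D X Y) Z - M.pF Y (M.D X Z)

/-- `(B̃_X 'F)(Y,Z) = X('F(Y,Z)) - 'F(B̃_X Y, Z) - 'F(Y, B̃_X Z)` -/
def BpF (X Y Z : V) : R := M.act X (M.pF Y Z) - M.pF (M.B X Y) Z - M.pF Y (M.B X Z)

/-- `(D_X F)(Y) = D_X (F Y) - F (D_X Y)` -/
def DF (X Y : V) : V := M.D X (M.F Y) - M.F (M.D X Y)

/-- `(B̃_X F)(Y) = B̃_X (F Y) - F (B̃_X Y)` -/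
def BF (X Y : V) : V := M.B X (M.F Y) - M.F (M.B X Y)

/-- `(D_X w)(Y) = X(w(Y)) - w(D_X Y)` for a 1-form `w` -/
def Dw (w : V → R) (X Y : V) : R := M.act X (w Y) - w (M.D X Y)

/-- `(B̃_X w)(Y) = X(w(Y)) - w(B̃_X Y)` for a 1-form `w` -/
def Bw (w : V → R) (X Y : V) : R := M.act X (w Y) - w (M.B X Y)

/-- `(B̃_X g)(Y,Z) = X(g(Y,Z)) - g(B̃_X Y, Z) - g(Y, B̃_X Z)` -/
def Bg (X Y Z : V) : R := M.act X (M.g Y Z) - M.g (M.B X Y) Z - M.g Y (M.B X Z)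

/-- the manifold is of the first class with respect to the Riemannian connection `D` -/
def FirstClassD : Prop :=
  (∀ X Y : V, M.DA X (M.F Y) = -(M.DA (M.F X) Y)) ∧
  (∀ X Y : V, M.DA X (M.F Y) = M.DA Y (M.F X)) ∧
  (∀ Y : V, M.DF M.T Y = 0)

/-- the manifold is of the first class with respect to `B̃` -/
def FirstClassB : Prop :=
  (∀ X Y : V, M.BA X (M.F Y) = -(M.BA (M.F X) Y)) ∧
  (∀ X Y : V, M.BA X (M.F Y) = M.BA Y (M.F X)) ∧
  (∀ Y : V, M.BF M.T Y = 0)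

/-- generalized co-symplectic manifold -/
def GenCosymplectic : Prop :=
  ∀ X Y Z : V, M.DpF X Y Z = M.A Y * M.DA X (M.F Z) - M.A Z * M.DA X (M.F Y)

/-- generalized quasi-Sasakian manifold -/
def GenQuasiSasakian : Prop :=
  ∀ X Y Z : V,
    M.DpF X Y Z + M.DpF Y Z X + M.DpF Z X Y =
      M.A X * (M.DA Y (M.F Z) - M.DA Z (M.F Y)) +
      M.A Y * (M.DA Z (M.F X) - M.DA X (M.F Z)) +
      M.A Z * (M.DA X (M.F Y) - M.DA Y (M.F X))

/-- the Nijenhuis tensor on a generalized co-symplectic manifold -/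
def N (X Y Z : V) : R :=
  M.DpF (M.F X) Y Z - M.DpF (M.F Y) X Z + M.DpF X Y (M.F Z) - M.DpF Y X (M.F Z)

/-- `d'F(X,Y,Z)`, the exterior differential of the fundamental 2-form -/
def dpF (X Y Z : V) : R := M.DpF X Y Z + M.DpF Y Z X + M.DpF Z X Y

/-- a 1-form `w` is covariant almost analytic with respect to `D` -/
def CovAlmostAnalyticD (w : V → R) : Prop :=
  ∀ X Y : V, w (M.DF X Y - M.DF Y X) = M.Dw w (M.F X) Y - M.Dw w X (M.F Y)

/-- a 1-form `w` is covariant almost analytic with respect to `B̃` -/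
def CovAlmostAnalyticB (w : V → R) : Prop :=
  ∀ X Y : V, w (M.BF X Y - M.BF Y X) = M.Bw w (M.F X) Y - M.Bw w X (M.F Y)

end ACM

/-- If the manifold is of the first class with respect to the Riemannian
connection `D`, then it is of the first class with respect to the semi-symmetric
non-metric connection `B̃`: `(B̃_X A)(Ȳ) = -(B̃_X̄ A)(Y) = (B̃_Y A)(X̄)` for all `X, Y`,
and `B̃_T F = 0`. -/
theorem firstClass_D_implies_firstClass_B
    {R : Type*} [CommRing R] {V : Type*} [AddCommGroup V] [Module R V] (M : ACM R V)
    (h : M.FirstClassD) : M.FirstClassB := by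
  obtain ⟨h1, h2, h3⟩ := h
  simp only [ACM.DA] at h1 h2
  simp only [ACM.DF] at h3
  have hneg : ∀ X Z : V, M.g (-X) Z = -M.g X Z := by
    intro X Z
    have hX : (-X : V) = (-1 : R) • X := by module
    rw [hX, M.g_smul_left]; ring
  have hAF : ∀ Z : V, M.g M.T (M.F Z) = 0 := by
    intro Z; rw [M.g_symm, ← M.A_eq, M.A_F]
  have hFT : ∀ Z : V, M.g (M.F M.T) Z = 0 := by
    intro Z
    have e := M.gFF (M.F M.T) Z
    rw [M.FF, M.A_F, M.g_add_left, M.g_smul_left, hneg, hAF] at e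
    linear_combination -e
  have e2 : ∀ X Y : V, M.pF (M.F X) Y = -M.g X Y + M.A X * M.A Y := by
    intro X Y
    simp only [ACM.pF]
    rw [M.FF, M.g_add_left, M.g_smul_left, hneg, M.g_symm M.T Y, ← M.A_eq]
  have e1 : ∀ X Y : V, M.pF X (M.F Y) = M.g X Y - M.A X * M.A Y := by
    intro X Y
    simp only [ACM.pF]; exact M.gFF X Y
  refine ⟨fun X Y => ?_, fun X Y => ?_, fun Y => ?_⟩
  · simp only [ACM.BA, ACM.B, M.A_add, M.A_smul, e1, e2]
    linear_combination h1 X Y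
  · simp only [ACM.BA, ACM.B, M.A_add, M.A_smul, e1, e2]
    rw [M.g_symm X Y]
    linear_combination h2 X Y
  · simp only [ACM.BF, ACM.B, ACM.pF, hFT, zero_smul, add_zero]
    exact h3 Y
end

section
/- Suppose the almost contact metric manifold M is of the first class with respect to the Riemannian connection D. If (B̃_X 'F)(Y,Z) + (B̃_Y 'F)(Z,X) + (B̃_Z 'F)(X,Y) = 0 for all vector fields X, Y, Z, then M is a generalized quasi-Sasakian manifold (of the first kind). -/
section Aux

variable {R : Type*} [CommRing R] {V : Type*} [AddCommGroup V] [Module R V] (M : ACM R V)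

lemma aux_g_zero_left (Z : V) : M.g 0 Z = 0 := by
  have h := M.g_add_left 0 0 Z
  simp at h
  linear_combination h

lemma aux_g_neg_left (Y Z : V) : M.g (-Y) Z = -(M.g Y Z) := by
  have h := M.g_add_left (-Y) Y Z
  simp [aux_g_zero_left] at h
  linear_combination -h

lemma aux_g_neg_right (Y Z : V) : M.g Y (-Z) = -(M.g Y Z) := by
  rw [M.g_symm, aux_g_neg_left, M.g_symm]

lemma aux_g_add_right (X Y Z : V) : M.g X (Y + Z) = M.g X Y + M.g X Z := by
  rw [M.g_symm, M.g_add_left, M.g_symm Y, M.g_symm Z]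

lemma aux_g_smul_right (f : R) (X Y : V) : M.g X (f • Y) = f * M.g X Y := by
  rw [M.g_symm, M.g_smul_left, M.g_symm]

lemma aux_skew (X Y : V) : M.g (M.F X) Y = -(M.g X (M.F Y)) := by
  have h : M.g (M.F X) (M.F (M.F Y)) = M.g X (M.F Y) := by
    rw [M.gFF, M.A_F, mul_zero, sub_zero]
  rw [M.FF] at h
  rw [aux_g_add_right, aux_g_neg_right, aux_g_smul_right, ← M.A_eq, M.A_F,
    mul_zero, add_zero] at h
  linear_combination -h

lemma aux_pF_T_left (Z : V) : M.pF M.T Z = 0 := by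
  unfold ACM.pF
  rw [aux_skew, M.g_symm, ← M.A_eq, M.A_F, neg_zero]

lemma aux_pF_T_right (Y : V) : M.pF Y M.T = 0 := by
  unfold ACM.pF
  rw [← M.A_eq, M.A_F]

lemma aux_pF_smul_left (f : R) (X Y : V) : M.pF (f • X) Y = f * M.pF X Y := by
  unfold ACM.pF
  rw [M.F_smul, M.g_smul_left]

lemma aux_BpF_eq_DpF (X Y Z : V) : M.BpF X Y Z = M.DpF X Y Z := by
  unfold ACM.BpF ACM.DpF ACM.B
  have h1 : M.pF (M.D X Y + M.pF X Y • M.T) Z = M.pF (M.D X Y) Z := by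
    unfold ACM.pF
    rw [M.F_add, M.g_add_left]
    show _ + M.pF (M.pF X Y • M.T) Z = _
    rw [aux_pF_smul_left, aux_pF_T_left, mul_zero, add_zero]
  have h2 : M.pF Y (M.D X Z + M.pF X Z • M.T) = M.pF Y (M.D X Z) := by
    unfold ACM.pF
    rw [aux_g_add_right, aux_g_smul_right]
    show _ + M.pF X Z * M.pF Y M.T = _
    rw [aux_pF_T_right, mul_zero, add_zero]
  rw [h1, h2]

end Aux

/-- Suppose the manifold is of the first class with respect to `D`.
If `(B̃_X 'F)(Y,Z) + (B̃_Y 'F)(Z,X) + (B̃_Z 'F)(X,Y) = 0` for all `X, Y, Z`, then the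
manifold is a generalized quasi-Sasakian manifold (of the first kind). -/
theorem genQuasiSasakian_of_cyclic_BpF_vanishing
    {R : Type*} [CommRing R] {V : Type*} [AddCommGroup V] [Module R V] (M : ACM R V)
    (hfc : M.FirstClassD)
    (hcyc : ∀ X Y Z : V, M.BpF X Y Z + M.BpF Y Z X + M.BpF Z X Y = 0) :
    M.GenQuasiSasakian := by
  intro X Y Z
  have h := hcyc X Y Z
  rw [aux_BpF_eq_DpF, aux_BpF_eq_DpF, aux_BpF_eq_DpF] at h
  have hs := hfc.2.1
  rw [h, hs Y Z, hs Z X, hs X Y]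
  ring
end

section
/- The almost contact metric manifold M is a generalized co-symplectic manifold if and only if (B̃_X 'F)(Y,Z) = A(Y)[(B̃_X A)(Z̄) + g(X,Z)] − A(Z)[(B̃_X A)(Ȳ) + g(X,Y)] for all vector fields X, Y, Z, where B̃ is the semi-symmetric non-metric connection. -/
namespace ACM

variable {R : Type*} [CommRing R] {V : Type*} [AddCommGroup V] [Module R V] (M : ACM R V)

lemma act_zero (X : V) : M.act X 0 = 0 := by
  have h := M.act_add X 0 0
  rw [add_zero] at h
  linear_combination -h

lemma g_add_right (X Y Z : V) : M.g X (Y + Z) = M.g X Y + M.g X Z := by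
  rw [M.g_symm, M.g_add_left, M.g_symm Y, M.g_symm Z]

lemma g_smul_right (f : R) (X Y : V) : M.g X (f • Y) = f * M.g X Y := by
  rw [M.g_symm, M.g_smul_left, M.g_symm]

lemma AT_mul (Y : V) : (M.A M.T - 1) * M.A Y = 0 := by
  have h := M.A_F (M.F Y)
  rw [M.FF, M.A_add, ← neg_one_smul R Y, M.A_smul, M.A_smul] at h
  linear_combination h

lemma gF_skew (X Y : V) : M.g (M.F X) Y = -M.g X (M.F Y) := by
  have h := M.gFF X (M.F Y)
  rw [M.FF, M.A_F, M.g_add_right, M.g_smul_right, ← neg_one_smul R Y,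
    M.g_smul_right, ← M.A_eq, M.A_F] at h
  linear_combination -h

lemma gFT_left (Z : V) : M.g (M.F M.T) Z = 0 := by
  rw [M.gF_skew, M.g_symm, ← M.A_eq, M.A_F, neg_zero]

lemma gF_T (Y : V) : M.g (M.F Y) M.T = 0 := by
  rw [← M.A_eq, M.A_F]

lemma BpF_eq_DpF (X Y Z : V) : M.BpF X Y Z = M.DpF X Y Z := by
  unfold BpF DpF B pF
  rw [M.F_add, M.F_smul, M.g_add_left, M.g_smul_left, M.g_add_right, M.g_smul_right,
    M.gFT_left, M.gF_T]
  ring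

lemma BA_F (X Z : V) :
    M.BA X (M.F Z) = M.DA X (M.F Z) - (M.g X Z - M.A X * M.A Z) * M.A M.T := by
  unfold BA DA B pF
  rw [M.A_add, M.A_smul, M.gFF]
  ring

end ACM

/-- The almost contact metric manifold is a generalized co-symplectic
manifold if and only if
`(B̃_X 'F)(Y,Z) = A(Y)[(B̃_X A)(Z̄) + g(X,Z)] - A(Z)[(B̃_X A)(Ȳ) + g(X,Y)]`
for all vector fields `X, Y, Z`. -/
theorem genCosymplectic_iff_BpF_formula
    {R : Type*} [CommRing R] {V : Type*} [AddCommGroup V] [Module R V] (M : ACM R V) :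
    M.GenCosymplectic ↔
    (∀ X Y Z : V, M.BpF X Y Z =
        M.A Y * (M.BA X (M.F Z) + M.g X Z) - M.A Z * (M.BA X (M.F Y) + M.g X Y)) := by
  constructor
  · intro h X Y Z
    rw [M.BpF_eq_DpF, M.BA_F, M.BA_F]
    linear_combination h X Y Z + M.g X Z * M.AT_mul Y - M.g X Y * M.AT_mul Z
  · intro h X Y Z
    have h' := h X Y Z
    rw [M.BpF_eq_DpF, M.BA_F, M.BA_F] at h'
    linear_combination h' - M.g X Z * M.AT_mul Y + M.g X Y * M.AT_mul Z
end

section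
/- On a generalized co-symplectic manifold M on which the structure vector field T is Killing with respect to B̃, if the fundamental 2-form 'F is closed (d'F = 0), then the Nijenhuis tensor satisfies 'N(X,Y,Z̄) = 0 for all vector fields X, Y, Z. -/
namespace ACM

variable {R : Type*} [CommRing R] {V : Type*} [AddCommGroup V] [Module R V] (M : ACM R V)

lemma act_neg (X : V) (f : R) : M.act X (-f) = -M.act X f := by
  have h := M.act_add X f (-f)
  rw [add_neg_cancel, M.act_zero] at h
  linear_combination -h

lemma g_neg_left (X Y : V) : M.g (-X) Y = -M.g X Y := by
  rw [← neg_one_smul R X, M.g_smul_left]; ring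

lemma g_neg_right (X Y : V) : M.g X (-Y) = -M.g X Y := by
  rw [M.g_symm, M.g_neg_left, M.g_symm]

lemma A_neg (X : V) : M.A (-X) = -M.A X := by
  rw [← neg_one_smul R X, M.A_smul]; ring

lemma D_neg_right (X Y : V) : M.D X (-Y) = -M.D X Y := by
  rw [← neg_one_smul R Y, M.D_leibniz]
  have h1 : M.act X (-1 : R) = 0 := by
    rw [show (-1 : R) = -(1 : R) by ring, M.act_neg]
    have h := M.act_mul X 1 1
    rw [mul_one] at h
    have : M.act X (1 : R) = 0 := by linear_combination -h
    rw [this]; ring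
  rw [h1, zero_smul, zero_add, neg_one_smul]

/-- antisymmetry of the fundamental 2-form -/
lemma pF_skew (X Y : V) : M.pF X Y = -M.pF Y X := by
  have h := M.gFF (M.F X) Y
  rw [M.FF X, M.A_F, M.g_add_left, M.g_neg_left, M.g_smul_left] at h
  have hT : M.g M.T (M.F Y) = 0 := by
    rw [M.g_symm, ← M.A_eq, M.A_F]
  rw [hT] at h
  unfold pF
  rw [M.g_symm (M.F Y) X]
  linear_combination -h

lemma DA_add_right (X Y Z : V) : M.DA X (Y + Z) = M.DA X Y + M.DA X Z := by
  unfold DA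
  rw [M.A_add, M.act_add, M.D_add_right, M.A_add]; ring

lemma DA_smul_right (f : R) (X Y : V) : M.DA X (f • Y) = f * M.DA X Y := by
  unfold DA
  rw [M.A_smul, M.act_mul, M.D_leibniz, M.A_add, M.A_smul, M.A_smul]; ring

lemma DA_neg_right (X Y : V) : M.DA X (-Y) = -M.DA X Y := by
  rw [← neg_one_smul R Y, M.DA_smul_right]; ring

lemma pF_add_right (X Y Z : V) : M.pF X (Y + Z) = M.pF X Y + M.pF X Z := by
  unfold pF; rw [M.g_add_right]

lemma pF_smul_right (f : R) (X Y : V) : M.pF X (f • Y) = f * M.pF X Y := by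
  unfold pF; rw [M.g_smul_right]

lemma pF_neg_right (X Y : V) : M.pF X (-Y) = -M.pF X Y := by
  unfold pF; rw [M.g_neg_right]

lemma DpF_add_right (X Y Z W : V) :
    M.DpF X Y (Z + W) = M.DpF X Y Z + M.DpF X Y W := by
  unfold DpF
  rw [M.pF_add_right, M.act_add, M.pF_add_right, M.D_add_right, M.pF_add_right]; ring

lemma DpF_smul_right (f : R) (X Y Z : V) :
    M.DpF X Y (f • Z) = f * M.DpF X Y Z := by
  unfold DpF
  rw [M.pF_smul_right, M.act_mul, M.pF_smul_right, M.D_leibniz, M.pF_add_right,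
    M.pF_smul_right, M.pF_smul_right]; ring

lemma DpF_neg_right (X Y Z : V) : M.DpF X Y (-Z) = -M.DpF X Y Z := by
  rw [← neg_one_smul R Z, M.DpF_smul_right]; ring

/-- `T` Killing w.r.t. `B̃` implies `T` Killing w.r.t. `D`. -/
lemma DA_killing (hkill : ∀ X Y : V, M.BA X Y + M.BA Y X = 0) (X Y : V) :
    M.DA X Y + M.DA Y X = 0 := by
  have h := hkill X Y
  unfold BA B at h
  rw [M.A_add, M.A_smul, M.A_add, M.A_smul, M.pF_skew Y X] at h
  unfold DA
  linear_combination h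

end ACM

/-- On a generalized co-symplectic manifold on which `T` is Killing with
respect to `B̃`, if the fundamental 2-form `'F` is closed (`d'F = 0`), then the
Nijenhuis tensor satisfies `'N(X,Y,Z̄) = 0` for all vector fields `X, Y, Z`. -/
theorem nijenhuis_vanishes_of_closed_pF
    {R : Type*} [CommRing R] {V : Type*} [AddCommGroup V] [Module R V] (M : ACM R V)
    (hgc : M.GenCosymplectic)
    (hkill : ∀ X Y : V, M.BA X Y + M.BA Y X = 0)
    (hclosed : ∀ X Y Z : V, M.dpF X Y Z = 0) :
    ∀ X Y Z : V, M.N X Y (M.F Z) = 0 := by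
  have hk := M.DA_killing hkill
  -- the consequence of closedness + generalized co-symplectic
  have hstar : ∀ X Y Z : V,
      M.A Y * M.DA X (M.F Z) - M.A Z * M.DA X (M.F Y)
      + (M.A Z * M.DA Y (M.F X) - M.A X * M.DA Y (M.F Z))
      + (M.A X * M.DA Z (M.F Y) - M.A Y * M.DA Z (M.F X)) = 0 := by
    intro X Y Z
    have h := hclosed X Y Z
    unfold ACM.dpF at h
    rw [hgc X Y Z, hgc Y Z X, hgc Z X Y] at h
    linear_combination h
  intro X Y Z
  unfold ACM.N
  have hF2 : ∀ W : V, M.F (M.F W) = -W + M.A W • M.T := M.FF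
  rw [hgc (M.F X) Y (M.F Z), hgc (M.F Y) X (M.F Z)]
  rw [hF2 Z, M.DpF_add_right, M.DpF_neg_right, M.DpF_smul_right,
    M.DpF_add_right, M.DpF_neg_right, M.DpF_smul_right]
  rw [M.DA_add_right, M.DA_neg_right, M.DA_smul_right,
    M.DA_add_right, M.DA_neg_right, M.DA_smul_right]
  rw [hgc X Y Z, hgc X Y M.T, hgc Y X Z, hgc Y X M.T, M.A_F]
  linear_combination (-1 : R) * hstar X Y Z + M.A Z * hstar X Y M.T
    + (-(M.A Y)) * hk (M.F X) Z + (M.A Y * M.A Z) * hk (M.F X) M.T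
    + M.A X * hk (M.F Y) Z + (-(M.A X * M.A Z)) * hk (M.F Y) M.T
end
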